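/- Let λ₁,…,λₙ be a graded basis of an n-dimensional space M of linear functionals on Π(ℝ^d), with orders κᵢ := max{k : λᵢ vanishes on Π_{<k}}, and define wⱼ(x) := λⱼ(‖x−·‖^(2κⱼ)). Then deg wⱼ = κⱼ for each j. -/

import Mathlib

/-!
Write `‖x - y‖² = ‖x‖² + ‖y‖² - 2⟨x, y⟩` and expand `‖x - y‖^(2k)` by the binomial and
multinomial theorems into terms `c · p_{a,γ}(x) p_{b-a,γ}(y)` with `|γ| = k - b`, where
`p_{a,γ} = ‖·‖^(2a) (·)^γ` has degree `2a + |γ|`. A functional `λ` of order `k` kills `p_{b-a,γ}`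
unless `b ≥ 2a`, and then `p_{a,γ}` has degree at most `k`; so `deg w ≤ k`.

Applying `λ` once more, only the terms with `b = 2a` survive, and after multiplication by `(-1)^k`
each is a nonnegative multiple of `(λ p_{a,γ})²`. The term `b = 0`, `γ = μ`, with `|μ| = k` and
`λ(x^μ) ≠ 0`, is strictly positive, so `λ w ≠ 0`; as `λ` vanishes on `Π_{<k}`, `deg w ≥ k`.
-/

open MvPolynomial Finset

noncomputable section

/-- The multi-index on the first (`x`) block of variables of a monomial in `Fin d ⊕ Fin d`. -/
def xpart {d : ℕ} (m : (Fin d ⊕ Fin d) →₀ ℕ) : Fin d →₀ ℕ :=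
  Finsupp.equivFunOnFinite.symm fun i => m (Sum.inl i)

/-- The multi-index on the second (`y`) block of variables. -/
def ypart {d : ℕ} (m : (Fin d ⊕ Fin d) →₀ ℕ) : Fin d →₀ ℕ :=
  Finsupp.equivFunOnFinite.symm fun i => m (Sum.inr i)

/-- `(l ⊗ m) f`: apply `l` in the `x`-variables and `m` in the `y`-variables of a
two-block polynomial `f`, via its canonical representation as a sum of products
of monomials in `x` and monomials in `y`. -/
def tensorApply {d : ℕ} (l m : Module.Dual ℝ (MvPolynomial (Fin d) ℝ))
    (f : MvPolynomial (Fin d ⊕ Fin d) ℝ) : ℝ :=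
  ∑ mo ∈ f.support, f.coeff mo * l (monomial (xpart mo) 1) * m (monomial (ypart mo) 1)

/-- Apply the linear functional `l` in the second (`y`) block of variables,
yielding a polynomial in the first (`x`) block of variables. -/
def applySecond {d : ℕ} (l : Module.Dual ℝ (MvPolynomial (Fin d) ℝ))
    (f : MvPolynomial (Fin d ⊕ Fin d) ℝ) : MvPolynomial (Fin d) ℝ :=
  ∑ mo ∈ f.support, monomial (xpart mo) (f.coeff mo * l (monomial (ypart mo) 1))

/-- The polynomial `(x,y) ↦ ‖x-y‖^(2k)` in the `2d` variables `x(1),…,x(d),y(1),…,y(d)`. -/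
def distPoly (d k : ℕ) : MvPolynomial (Fin d ⊕ Fin d) ℝ :=
  (∑ i : Fin d, (X (Sum.inl i) - X (Sum.inr i)) ^ 2) ^ k

/-- `l` vanishes on all polynomials of total degree `< k` (i.e. `l ⊥ Π_{<k}`). -/
def VanishesLT {d : ℕ} (l : Module.Dual ℝ (MvPolynomial (Fin d) ℝ)) (k : ℕ) : Prop :=
  ∀ p : MvPolynomial (Fin d) ℝ, p.totalDegree < k → l p = 0

/-- `l` vanishes on all polynomials of total degree `≤ k` (i.e. `l ⊥ Π_{≤k}`). -/
def VanishesLE {d : ℕ} (l : Module.Dual ℝ (MvPolynomial (Fin d) ℝ)) (k : ℕ) : Prop :=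
  ∀ p : MvPolynomial (Fin d) ℝ, p.totalDegree ≤ k → l p = 0

/-- `p_{a,β} : x ↦ ‖x‖^(2a) x^β` as a polynomial. -/
def pPoly (d : ℕ) (a : ℕ) (β : Fin d →₀ ℕ) : MvPolynomial (Fin d) ℝ :=
  (∑ i : Fin d, X i ^ 2) ^ a * monomial β 1

/-- `⊥Π_{<k}`: the subspace of linear functionals vanishing on all polynomials
of total degree `< k`. -/
def perpLT (d k : ℕ) : Submodule ℝ (Module.Dual ℝ (MvPolynomial (Fin d) ℝ)) where
  carrier := {l | VanishesLT l k}
  zero_mem' := fun _ _ => rfl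
  add_mem' := fun {a b} ha hb p hp => by
    simp [LinearMap.add_apply, ha p hp, hb p hp]
  smul_mem' := fun c l hl p hp => by
    simp [LinearMap.smul_apply, hl p hp]

/-- `Π_{<k}`: the subspace of polynomials of total degree `< k`. -/
def degLT (d k : ℕ) : Submodule ℝ (MvPolynomial (Fin d) ℝ) where
  carrier := {p | ∀ m ∈ p.support, (m.sum fun _ e => e) < k}
  zero_mem' := by simp
  add_mem' := fun {a b} ha hb m hm => by
    rcases Finset.mem_union.mp (MvPolynomial.support_add hm) with h | h
    · exact ha m h
    · exact hb m h
  smul_mem' := fun c p hp m hm => hp m (MvPolynomial.support_smul hm)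

variable {d : ℕ}

section ApplySecond

variable (l : Module.Dual ℝ (MvPolynomial (Fin d) ℝ))

lemma applySecond_eq_sum_of_support_subset (f : MvPolynomial (Fin d ⊕ Fin d) ℝ)
    {s : Finset ((Fin d ⊕ Fin d) →₀ ℕ)} (hs : f.support ⊆ s) :
    applySecond l f = ∑ mo ∈ s, monomial (xpart mo) (f.coeff mo * l (monomial (ypart mo) 1)) :=
  Finset.sum_subset hs fun mo _ hmo => by rw [notMem_support_iff.mp hmo, zero_mul, monomial_zero]

def applySecondLinearMap : MvPolynomial (Fin d ⊕ Fin d) ℝ →ₗ[ℝ] MvPolynomial (Fin d) ℝ where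
  toFun := applySecond l
  map_add' f g := by
    classical
    rw [applySecond_eq_sum_of_support_subset l (f + g) support_add,
      applySecond_eq_sum_of_support_subset l f subset_union_left,
      applySecond_eq_sum_of_support_subset l g subset_union_right, ← sum_add_distrib]
    exact sum_congr rfl fun mo _ => by rw [coeff_add, add_mul, map_add]
  map_smul' c f := by
    rw [applySecond_eq_sum_of_support_subset l (c • f) support_smul, applySecond, smul_sum]
    exact sum_congr rfl fun mo _ => by rw [coeff_smul, smul_monomial, smul_eq_mul, mul_assoc]; rfl

@[simp] lemma coe_applySecondLinearMap : ⇑(applySecondLinearMap l) = applySecond l := rfl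

lemma applySecond_monomial (mo : (Fin d ⊕ Fin d) →₀ ℕ) (c : ℝ) :
    applySecond l (monomial mo c) = monomial (xpart mo) (c * l (monomial (ypart mo) 1)) := by
  classical
  rw [applySecond_eq_sum_of_support_subset l _ support_monomial_subset, sum_singleton,
    coeff_monomial, if_pos rfl]

lemma xpart_mapDomain_inl_add_mapDomain_inr (α β : Fin d →₀ ℕ) :
    xpart (Finsupp.mapDomain Sum.inl α + Finsupp.mapDomain Sum.inr β) = α := by
  ext i
  simp [xpart, Finsupp.mapDomain_apply Sum.inl_injective,
    Finsupp.mapDomain_of_notMem_range _ _ (by simp : Sum.inl i ∉ Set.range (Sum.inr : Fin d → _))]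

lemma ypart_mapDomain_inl_add_mapDomain_inr (α β : Fin d →₀ ℕ) :
    ypart (Finsupp.mapDomain Sum.inl α + Finsupp.mapDomain Sum.inr β) = β := by
  ext i
  simp [ypart, Finsupp.mapDomain_apply Sum.inr_injective,
    Finsupp.mapDomain_of_notMem_range _ _ (by simp : Sum.inr i ∉ Set.range (Sum.inl : Fin d → _))]

lemma applySecond_rename_inl_mul_rename_inr (F G : MvPolynomial (Fin d) ℝ) :
    applySecond l (rename Sum.inl F * rename Sum.inr G) = l G • F := by
  change applySecondLinearMap l _ = _
  induction F using MvPolynomial.induction_on' with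
  | add p q hp hq => rw [map_add, add_mul, map_add, hp, hq, smul_add]
  | monomial α c =>
    induction G using MvPolynomial.induction_on' with
    | add p q hp hq => rw [map_add, mul_add, map_add, hp, hq, map_add, add_smul]
    | monomial β e =>
      have hβ : monomial β e = e • monomial β (1 : ℝ) := by rw [smul_monomial, smul_eq_mul, mul_one]
      rw [rename_monomial, rename_monomial, monomial_mul, coe_applySecondLinearMap,
        applySecond_monomial, xpart_mapDomain_inl_add_mapDomain_inr,
        ypart_mapDomain_inl_add_mapDomain_inr, hβ, map_smul, smul_eq_mul, smul_monomial,
        smul_eq_mul]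
      ring_nf

end ApplySecond

lemma monomial_equivFunOnFinite_symm_one {σ R : Type*} [Fintype σ] [CommSemiring R]
    (γ : σ → ℕ) : monomial (Finsupp.equivFunOnFinite.symm γ) (1 : R) = ∏ i, X i ^ γ i := by
  rw [monomial_eq, C_1, one_mul, Finsupp.prod_fintype _ _ fun _ => pow_zero _]
  rfl

lemma sum_sq_X_inl_sub_X_inr (d : ℕ) :
    ∑ i : Fin d, ((X (Sum.inl i) - X (Sum.inr i)) ^ 2 : MvPolynomial (Fin d ⊕ Fin d) ℝ) =
      (rename Sum.inl (∑ i : Fin d, X i ^ 2) + rename Sum.inr (∑ i : Fin d, X i ^ 2))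
        + (-2) * ∑ i : Fin d, X (Sum.inl i) * X (Sum.inr i) := by
  simp only [map_sum, map_pow, rename_X, mul_sum, ← sum_add_distrib]
  exact sum_congr rfl fun i _ => by ring

lemma distPoly_eq_sum (d k : ℕ) :
    distPoly d k =
      ∑ b ∈ range (k + 1), ∑ a ∈ range (b + 1), ∑ γ ∈ piAntidiag univ (k - b),
        ((k.choose b * b.choose a * Nat.multinomial univ γ : ℝ) * (-2) ^ (k - b)) •
          (rename Sum.inl (pPoly d a (Finsupp.equivFunOnFinite.symm γ)) *
            rename Sum.inr (pPoly d (b - a) (Finsupp.equivFunOnFinite.symm γ))) := by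
  rw [distPoly, sum_sq_X_inl_sub_X_inr, add_pow]
  refine sum_congr rfl fun b _ => ?_
  rw [add_pow, mul_pow, sum_pow_eq_sum_piAntidiag]
  simp only [sum_mul, mul_sum]
  rw [sum_comm]
  refine sum_congr rfl fun a _ => sum_congr rfl fun γ _ => ?_
  simp only [pPoly, monomial_equivFunOnFinite_symm_one, smul_eq_C_mul, map_mul, map_pow,
    map_prod, rename_X, map_natCast, map_neg, map_ofNat, mul_pow, prod_mul_distrib]
  ring

lemma applySecond_distPoly (l : Module.Dual ℝ (MvPolynomial (Fin d) ℝ)) (k : ℕ) :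
    applySecond l (distPoly d k) =
      ∑ b ∈ range (k + 1), ∑ a ∈ range (b + 1), ∑ γ ∈ piAntidiag univ (k - b),
        ((k.choose b * b.choose a * Nat.multinomial univ γ : ℝ) * (-2) ^ (k - b) *
            l (pPoly d (b - a) (Finsupp.equivFunOnFinite.symm γ))) •
          pPoly d a (Finsupp.equivFunOnFinite.symm γ) := by
  change applySecondLinearMap l _ = _
  simp only [distPoly_eq_sum, map_sum, map_smul]
  refine sum_congr rfl fun b _ => sum_congr rfl fun a _ => sum_congr rfl fun γ _ => ?_
  rw [coe_applySecondLinearMap, applySecond_rename_inl_mul_rename_inr, smul_smul]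

lemma totalDegree_pPoly_le (a : ℕ) (β : Fin d →₀ ℕ) :
    (pPoly d a β).totalDegree ≤ 2 * a + β.degree := by
  have hsq : (∑ i : Fin d, (X i : MvPolynomial (Fin d) ℝ) ^ 2).totalDegree ≤ 2 :=
    (totalDegree_finsetSum _ _).trans <| Finset.sup_le fun i _ => by
      rw [totalDegree_X_pow]
  refine (totalDegree_mul _ _).trans (add_le_add ?_ ?_)
  · exact (totalDegree_pow _ _).trans (by rw [mul_comm 2]; exact Nat.mul_le_mul_left a hsq)
  · exact (totalDegree_monomial_le _ _).trans_eq (Finsupp.degree_apply β).symm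

lemma degree_equivFunOnFinite_symm {σ : Type*} [Fintype σ] (γ : σ → ℕ) :
    (Finsupp.equivFunOnFinite.symm γ).degree = ∑ i, γ i := by
  rw [Finsupp.degree_eq_sum]
  rfl

lemma VanishesLT.apply_pPoly_eq_zero {l : Module.Dual ℝ (MvPolynomial (Fin d) ℝ)} {k a : ℕ}
    {β : Fin d →₀ ℕ} (hl : VanishesLT l k) (h : 2 * a + β.degree < k) : l (pPoly d a β) = 0 :=
  hl _ ((totalDegree_pPoly_le a β).trans_lt h)

lemma VanishesLT.totalDegree_applySecond_distPoly_le {l : Module.Dual ℝ (MvPolynomial (Fin d) ℝ)}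
    {k : ℕ} (hl : VanishesLT l k) : (applySecond l (distPoly d k)).totalDegree ≤ k := by
  rw [applySecond_distPoly]
  refine (totalDegree_finsetSum _ _).trans <| Finset.sup_le fun b hb =>
    (totalDegree_finsetSum _ _).trans <| Finset.sup_le fun a ha =>
    (totalDegree_finsetSum _ _).trans <| Finset.sup_le fun γ hγ => ?_
  have hdeg : (Finsupp.equivFunOnFinite.symm γ).degree = k - b := by
    rw [degree_equivFunOnFinite_symm, (mem_piAntidiag.mp hγ).1]
  rw [mem_range] at hb ha
  by_cases hab : b < 2 * a
  · rw [hl.apply_pPoly_eq_zero (by omega), mul_zero, zero_smul, totalDegree_zero]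
    exact Nat.zero_le k
  · exact (totalDegree_smul_le _ _).trans <| (totalDegree_pPoly_le _ _).trans (by omega)

lemma VanishesLT.exists_monomial_apply_ne_zero {l : Module.Dual ℝ (MvPolynomial (Fin d) ℝ)}
    {k : ℕ} (hl : VanishesLT l k) (hl' : ¬ VanishesLT l (k + 1)) :
    ∃ μ : Fin d →₀ ℕ, μ.degree = k ∧ l (monomial μ 1) ≠ 0 := by
  by_contra! h
  refine hl' fun p hp => ?_
  rw [p.as_sum, map_sum]
  refine sum_eq_zero fun μ hμ => ?_
  have hμk : μ.degree ≤ k := (le_totalDegree hμ).trans (Nat.lt_succ_iff.mp hp)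
  rw [← mul_one (coeff μ p), ← smul_eq_mul, ← smul_monomial, map_smul, smul_eq_mul]
  rcases hμk.lt_or_eq with hlt | heq
  · rw [hl _ (by rw [totalDegree_monomial _ one_ne_zero]; exact hlt), mul_zero]
  · rw [h μ heq, mul_zero]

lemma VanishesLT.neg_one_pow_mul_distPoly_term_nonneg
    {l : Module.Dual ℝ (MvPolynomial (Fin d) ℝ)} {k b a : ℕ} {γ : Fin d → ℕ} (hl : VanishesLT l k)
    (hb : b ∈ range (k + 1)) (ha : a ∈ range (b + 1)) (hγ : γ ∈ piAntidiag univ (k - b)) :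
    0 ≤ (-1) ^ k * ((k.choose b * b.choose a * Nat.multinomial univ γ : ℝ) * (-2) ^ (k - b) *
      l (pPoly d (b - a) (Finsupp.equivFunOnFinite.symm γ)) *
      l (pPoly d a (Finsupp.equivFunOnFinite.symm γ))) := by
  have hdeg : (Finsupp.equivFunOnFinite.symm γ).degree = k - b := by
    rw [degree_equivFunOnFinite_symm, (mem_piAntidiag.mp hγ).1]
  rw [mem_range] at hb ha
  rcases lt_trichotomy b (2 * a) with hab | hab | hab
  · rw [hl.apply_pPoly_eq_zero (by omega)]
    simp
  · rw [show b - a = a by omega]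
    have hsign : (-1 : ℝ) ^ k * (-2) ^ (k - b) = 2 ^ (k - b) := by
      rw [show (-2 : ℝ) = -1 * 2 by norm_num, mul_pow, ← mul_assoc, ← pow_add,
        show k + (k - b) = 2 * (k - a) by omega, pow_mul]
      norm_num
    have hsq := mul_self_nonneg (l (pPoly d a (Finsupp.equivFunOnFinite.symm γ)))
    calc (0 : ℝ) ≤ (k.choose b * b.choose a * Nat.multinomial univ γ : ℝ) * 2 ^ (k - b) *
          (l (pPoly d a (Finsupp.equivFunOnFinite.symm γ)) *
            l (pPoly d a (Finsupp.equivFunOnFinite.symm γ))) := by positivity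
      _ = _ := by rw [← hsign]; ring
  · rw [hl.apply_pPoly_eq_zero (a := a) (by omega)]
    simp

lemma VanishesLT.neg_one_pow_mul_apply_applySecond_distPoly_pos
    {l : Module.Dual ℝ (MvPolynomial (Fin d) ℝ)} {k : ℕ} (hl : VanishesLT l k)
    (hl' : ¬ VanishesLT l (k + 1)) : 0 < (-1) ^ k * l (applySecond l (distPoly d k)) := by
  obtain ⟨μ, hμk, hμ⟩ := hl.exists_monomial_apply_ne_zero hl'
  have hμmem : ⇑μ ∈ piAntidiag univ (k - 0) := by
    rw [mem_piAntidiag, ← Finsupp.degree_eq_sum, hμk]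
    exact ⟨rfl, fun i _ => mem_univ i⟩
  have hpos : 0 < (-1) ^ k * ((k.choose 0 * (0).choose 0 * Nat.multinomial univ ⇑μ : ℝ) *
      (-2) ^ (k - 0) * l (pPoly d (0 - 0) (Finsupp.equivFunOnFinite.symm ⇑μ)) *
      l (pPoly d 0 (Finsupp.equivFunOnFinite.symm ⇑μ))) := by
    have hmult : (0 : ℝ) < Nat.multinomial univ ⇑μ := Nat.cast_pos.mpr (Nat.multinomial_pos _ _)
    have hμ2 := mul_self_pos.mpr hμ
    have hsign : (-1 : ℝ) ^ k * (-2) ^ k = 2 ^ k := by rw [← mul_pow]; norm_num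
    simp only [Finsupp.equivFunOnFinite_symm_coe, pPoly, pow_zero, one_mul, Nat.choose_zero_right,
      Nat.cast_one, Nat.sub_zero]
    calc (0 : ℝ) < Nat.multinomial univ ⇑μ * 2 ^ k *
          (l (monomial μ 1) * l (monomial μ 1)) := by positivity
      _ = _ := by rw [← hsign]; ring
  have hb0 : 0 ∈ range (k + 1) := mem_range.mpr k.succ_pos
  have ha0 : 0 ∈ range (0 + 1) := mem_range.mpr Nat.one_pos
  simp only [applySecond_distPoly, map_sum, map_smul, smul_eq_mul, mul_sum]
  refine sum_pos' (fun b hb => sum_nonneg fun a ha => sum_nonneg fun γ hγ =>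
    hl.neg_one_pow_mul_distPoly_term_nonneg hb ha hγ) ⟨0, hb0, ?_⟩
  refine sum_pos' (fun a ha => sum_nonneg fun γ hγ =>
    hl.neg_one_pow_mul_distPoly_term_nonneg hb0 ha hγ) ⟨0, ha0, ?_⟩
  exact sum_pos' (fun γ hγ => hl.neg_one_pow_mul_distPoly_term_nonneg hb0 ha0 hγ)
    ⟨⇑μ, hμmem, hpos⟩

theorem VanishesLT.totalDegree_applySecond_distPoly {l : Module.Dual ℝ (MvPolynomial (Fin d) ℝ)}
    {k : ℕ} (hl : VanishesLT l k) (hl' : ¬ VanishesLT l (k + 1)) :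
    (applySecond l (distPoly d k)).totalDegree = k := by
  refine hl.totalDegree_applySecond_distPoly_le.antisymm (not_lt.mp fun hlt => ?_)
  have hpos := hl.neg_one_pow_mul_apply_applySecond_distPoly_pos hl'
  rw [hl _ hlt, mul_zero] at hpos
  exact lt_irrefl 0 hpos

theorem schaback_w_degree_general (d n : ℕ)
    (lam : Fin n → Module.Dual ℝ (MvPolynomial (Fin d) ℝ))
    (κ : Fin n → ℕ)
    -- `κ i` is the order of `lam i`: the largest `k` with `lam i ⊥ Π_{<k}`
    (horder : ∀ i, VanishesLT (lam i) (κ i) ∧ ¬ VanishesLT (lam i) (κ i + 1))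
    : ∀ j, (applySecond (lam j) (distPoly d (κ j))).totalDegree = κ j :=
  fun j => (horder j).1.totalDegree_applySecond_distPoly (horder j).2

/-- For a graded basis `λ₁,…,λₙ` with orders `κᵢ`, the Schaback polynomials
`wⱼ(x) := λⱼ‖x−·‖^(2κⱼ)` satisfy `deg wⱼ = κⱼ`. -/
theorem schaback_w_degree (d n : ℕ)
    (M : Submodule ℝ (Module.Dual ℝ (MvPolynomial (Fin d) ℝ)))
    (hM : Module.finrank ℝ M = n)
    (lam : Fin n → Module.Dual ℝ (MvPolynomial (Fin d) ℝ))
    (hmem : ∀ i, lam i ∈ M)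
    (κ : Fin n → ℕ)
    -- `κ i` is the order of `lam i`: the largest `k` with `lam i ⊥ Π_{<k}`
    (horder : ∀ i, VanishesLT (lam i) (κ i) ∧ ¬ VanishesLT (lam i) (κ i + 1))
    -- the basis is graded: `i ↦ κ i` is nondecreasing and, for each `k`,
    -- `(lam i : κ i ≥ k)` is a basis of `M ∩ ⊥Π_{<k}`
    (hmono : Monotone κ)
    (hbasis : ∀ k : ℕ,
      LinearIndependent ℝ (fun i : {i : Fin n // k ≤ κ i} => lam i.1) ∧
      Submodule.span ℝ (Set.range fun i : {i : Fin n // k ≤ κ i} => lam i.1) =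
        M ⊓ perpLT d k)
    : ∀ j, (applySecond (lam j) (distPoly d (κ j))).totalDegree = κ j :=
  schaback_w_degree_general d n lam κ horder
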